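/- Let N ≥ 2 and let y ∈ ℝ^N with y_1 > … > y_{N−1} > |y_N|. Then [y_N = 0 and 4 Σ_{j ≠ i} 1/(y_i² − y_j²) = 1 for every i = 1,…,N−1] holds if and only if [y_N = 0 and L_{N−1}^{(1)}(y_i²/2) = 0 for every i = 1,…,N−1] (equivalently, y_N = 0 and the numbers y_1²/2 > … > y_{N−1}²/2 are exactly the N−1 ordered zeros of the Laguerre polynomial L_{N−1}^{(1)}). -/

import Mathlib

/-- The generalized Laguerre polynomial
`L_n^{(α)}(x) = ∑_{k=0}^n binom(n+α, n−k) · (−x)^k / k!`, where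
`binom(n+α, n−k) = ((α+k+1)(α+k+2)⋯(α+n))/(n−k)!`. -/
noncomputable def laguerre (n : ℕ) (α : ℝ) (x : ℝ) : ℝ :=
  ∑ k ∈ Finset.range (n + 1),
    ((∏ m ∈ Finset.Ico k n, (α + (m : ℝ) + 1)) / ((n - k).factorial : ℝ))
      * ((-x) ^ k / (k.factorial : ℝ))

/-!
With `x_i = y_i² / 2` and `y_N = 0`, the stationarity equations are Stieltjes' conditions
`2 ∑_{j ≠ i} 1/(x_i - x_j) + (α + 1)/x_i = 1` for the `n = N - 1` nodes `x_i`, with `α = 1`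
(the term `j = N` gives `(α + 1)/x_i`). For `P = ∏ (X - x_i)` one has
`P''(x_i) = 2 P'(x_i) ∑_{j ≠ i} 1/(x_i - x_j)`, so these conditions say exactly that
`x P'' + (α + 1 - x) P' + n P`, a polynomial of degree `< n` because the top coefficients cancel,
vanishes at the `n` nodes, i.e. is zero. A nonzero polynomial solution of this Laguerre equation
has degree exactly `n`, so the monic solutions of degree `n` reduce to the monic multiple of
`L_n^{(α)}`; and `P` is that multiple iff the `x_i` are the `n` zeros of `L_n^{(α)}`.
-/

open Polynomial Finset Lagrange

section LaguerrePolynomial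

variable (n : ℕ) (α : ℝ)

noncomputable def laguerreCoeff (k : ℕ) : ℝ :=
  (∏ m ∈ Ico k n, (α + m + 1)) / (n - k).factorial * ((-1) ^ k / k.factorial)

noncomputable def laguerrePoly : ℝ[X] :=
  ∑ k ∈ range (n + 1), C (laguerreCoeff n α k) * X ^ k

noncomputable def monicLaguerrePoly : ℝ[X] :=
  ((-1) ^ n * n.factorial : ℝ) • laguerrePoly n α

noncomputable def laguerreOp : ℝ[X] →ₗ[ℝ] ℝ[X] where
  toFun p := X * derivative (derivative p) + (C (α + 1) - X) * derivative p + C (n : ℝ) * p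
  map_add' p q := by simp only [map_add]; ring
  map_smul' c p := by
    simp only [smul_eq_C_mul, derivative_mul, derivative_C, zero_mul, zero_add, RingHom.id_apply]
    ring

theorem laguerreOp_apply (p : ℝ[X]) :
    laguerreOp n α p
      = X * derivative (derivative p) + (C (α + 1) - X) * derivative p + C (n : ℝ) * p :=
  rfl

theorem eval_laguerrePoly (x : ℝ) : (laguerrePoly n α).eval x = laguerre n α x := by
  rw [laguerrePoly, laguerre, eval_finsetSum]
  refine sum_congr rfl fun k _ => ?_
  simp only [eval_mul, eval_C, eval_pow, eval_X, laguerreCoeff, neg_pow x]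
  ring

theorem coeff_laguerrePoly (k : ℕ) :
    (laguerrePoly n α).coeff k = if k ≤ n then laguerreCoeff n α k else 0 := by
  simp [laguerrePoly, finsetSum_coeff]

theorem natDegree_laguerrePoly_le : (laguerrePoly n α).natDegree ≤ n :=
  natDegree_le_iff_coeff_eq_zero.mpr fun k hk => by simp [coeff_laguerrePoly, not_le.mpr hk]

theorem laguerreCoeff_self : laguerreCoeff n α n = (-1) ^ n / n.factorial := by
  simp [laguerreCoeff]

theorem laguerreCoeff_succ {k : ℕ} (hk : k < n) :
    (k + 1) * (k + α + 1) * laguerreCoeff n α (k + 1) + (n - k) * laguerreCoeff n α k = 0 := by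
  obtain ⟨d, rfl⟩ : ∃ d, n = k + 1 + d := ⟨n - (k + 1), by omega⟩
  have hprod : ∏ m ∈ Ico k (k + 1 + d), (α + m + 1)
      = (k + α + 1) * ∏ m ∈ Ico (k + 1) (k + 1 + d), (α + m + 1) := by
    rw [prod_eq_prod_Ico_succ_bot (by omega)]
    ring
  have hsub : k + 1 + d - k = d + 1 := by omega
  rw [laguerreCoeff, laguerreCoeff, hprod, hsub, Nat.add_sub_cancel_left, Nat.factorial_succ,
    Nat.factorial_succ, pow_succ]
  push_cast
  field_simp
  ring

theorem natDegree_monicLaguerrePoly_le : (monicLaguerrePoly n α).natDegree ≤ n :=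
  (natDegree_smul_le _ _).trans (natDegree_laguerrePoly_le n α)

theorem coeff_monicLaguerrePoly_self : (monicLaguerrePoly n α).coeff n = 1 := by
  rw [monicLaguerrePoly, coeff_smul, coeff_laguerrePoly, if_pos le_rfl, laguerreCoeff_self,
    smul_eq_mul]
  have : ((-1 : ℝ) ^ n) ^ 2 = 1 := by rw [← pow_mul, mul_comm, pow_mul, neg_one_sq, one_pow]
  field_simp
  linear_combination this

theorem monic_monicLaguerrePoly : (monicLaguerrePoly n α).Monic :=
  monic_of_natDegree_le_of_coeff_eq_one n (natDegree_monicLaguerrePoly_le n α)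
    (coeff_monicLaguerrePoly_self n α)

theorem natDegree_monicLaguerrePoly : (monicLaguerrePoly n α).natDegree = n :=
  natDegree_eq_of_le_of_coeff_ne_zero (natDegree_monicLaguerrePoly_le n α)
    (by rw [coeff_monicLaguerrePoly_self]; exact one_ne_zero)

theorem eval_monicLaguerrePoly (x : ℝ) :
    (monicLaguerrePoly n α).eval x = (-1) ^ n * n.factorial * laguerre n α x := by
  rw [monicLaguerrePoly, eval_smul, eval_laguerrePoly, smul_eq_mul]

theorem coeff_laguerreOp (p : ℝ[X]) (k : ℕ) :
    (laguerreOp n α p).coeff k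
      = (k + 1) * (k + α + 1) * p.coeff (k + 1) + (n - k) * p.coeff k := by
  rcases k with _ | k
  · simp only [laguerreOp_apply, coeff_add, sub_mul, coeff_sub, coeff_C_mul, coeff_X_mul_zero,
      coeff_derivative]
    push_cast
    ring
  · simp only [laguerreOp_apply, coeff_add, sub_mul, coeff_sub, coeff_C_mul, coeff_X_mul,
      coeff_derivative]
    push_cast
    ring

theorem laguerreOp_laguerrePoly : laguerreOp n α (laguerrePoly n α) = 0 := by
  ext k
  rw [coeff_laguerreOp, coeff_zero, coeff_laguerrePoly, coeff_laguerrePoly]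
  rcases lt_trichotomy k n with hk | rfl | hk
  · rw [if_pos (Nat.succ_le_of_lt hk), if_pos hk.le]
    exact laguerreCoeff_succ n α hk
  · simp
  · simp [not_le.mpr hk, not_le.mpr (hk.trans k.lt_succ_self)]

theorem laguerreOp_monicLaguerrePoly : laguerreOp n α (monicLaguerrePoly n α) = 0 := by
  rw [monicLaguerrePoly, map_smul, laguerreOp_laguerrePoly, smul_zero]

theorem degree_laguerreOp_lt {p : ℝ[X]} (hp : p.natDegree ≤ n) :
    (laguerreOp n α p).degree < n := by
  refine (degree_lt_iff_coeff_zero _ _).mpr fun m hm => ?_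
  rw [coeff_laguerreOp, coeff_eq_zero_of_natDegree_lt (by omega : p.natDegree < m + 1)]
  rcases hm.eq_or_lt with rfl | hm
  · ring
  · rw [coeff_eq_zero_of_natDegree_lt (by omega : p.natDegree < m)]
    ring

theorem natDegree_eq_of_laguerreOp_eq_zero {p : ℝ[X]} (hp : p ≠ 0) (h : laguerreOp n α p = 0) :
    p.natDegree = n := by
  have hcoeff := congr_arg (coeff · p.natDegree) h
  simp only [coeff_laguerreOp, coeff_zero, coeff_eq_zero_of_natDegree_lt p.natDegree.lt_succ_self,
    mul_zero, zero_add, mul_eq_zero, coeff_natDegree, leadingCoeff_eq_zero, hp, or_false,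
    sub_eq_zero] at hcoeff
  exact_mod_cast hcoeff.symm

end LaguerrePolynomial

theorem Polynomial.Monic.degree_sub_lt {R : Type*} [Ring R] [Nontrivial R] {p q : R[X]}
    (hp : p.Monic) (hq : q.Monic) (h : p.natDegree = q.natDegree) :
    (p - q).degree < p.natDegree := by
  rw [← degree_eq_natDegree hp.ne_zero]
  refine degree_sub_lt_left ?_ hp.ne_zero (hp.leadingCoeff.trans hq.leadingCoeff.symm)
  rw [degree_eq_natDegree hp.ne_zero, degree_eq_natDegree hq.ne_zero, h]

theorem laguerreOp_eq_zero_iff {n : ℕ} {α : ℝ} {p : ℝ[X]} (hp : p.Monic)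
    (hn : p.natDegree = n) :
    laguerreOp n α p = 0 ↔ p = monicLaguerrePoly n α := by
  refine ⟨fun h => ?_, fun h => h ▸ laguerreOp_monicLaguerrePoly n α⟩
  by_contra hne
  have hr : p - monicLaguerrePoly n α ≠ 0 := sub_ne_zero.mpr hne
  have hdeg := hp.degree_sub_lt (monic_monicLaguerrePoly n α)
    (by rw [hn, natDegree_monicLaguerrePoly])
  rw [degree_eq_natDegree hr, hn, natDegree_eq_of_laguerreOp_eq_zero n α hr
    (by rw [map_sub, h, laguerreOp_monicLaguerrePoly, sub_zero])] at hdeg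
  exact lt_irrefl _ hdeg

section Nodal

variable {ι : Type*} {s : Finset ι} {v : ι → ℝ}

theorem nodal_eq_monicLaguerrePoly_iff (α : ℝ) (hvs : Set.InjOn v s) :
    nodal s v = monicLaguerrePoly #s α ↔ ∀ i ∈ s, laguerre #s α (v i) = 0 := by
  have hc : (-1 : ℝ) ^ #s * (#s).factorial ≠ 0 :=
    mul_ne_zero (pow_ne_zero _ (neg_ne_zero.mpr one_ne_zero))
      (Nat.cast_ne_zero.mpr (Nat.factorial_ne_zero _))
  constructor
  · intro h i hi
    have hroot := eval_nodal_at_node (v := v) hi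
    rw [h, eval_monicLaguerrePoly, mul_eq_zero] at hroot
    exact hroot.resolve_left hc
  · intro h
    refine eq_of_degree_sub_lt_of_eval_index_eq s hvs ?_ fun i hi => ?_
    · simpa using nodal_monic.degree_sub_lt (monic_monicLaguerrePoly #s α)
        (by rw [natDegree_nodal, natDegree_monicLaguerrePoly])
    · rw [eval_nodal_at_node hi, eval_monicLaguerrePoly, h i hi, mul_zero]

variable [DecidableEq ι] {i : ι}

theorem eval_nodal_erase_ne_zero (hvs : Set.InjOn v s) (hi : i ∈ s) :
    (nodal (s.erase i) v).eval (v i) ≠ 0 :=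
  eval_nodal_not_at_node fun _ hj h =>
    (ne_of_mem_erase hj) (hvs (mem_of_mem_erase hj) hi h.symm)

theorem eval_derivative_nodal_erase (hvs : Set.InjOn v s) (hi : i ∈ s) :
    (derivative (nodal (s.erase i) v)).eval (v i)
      = (nodal (s.erase i) v).eval (v i) * ∑ j ∈ s.erase i, 1 / (v i - v j) := by
  rw [derivative_nodal, eval_finsetSum, mul_sum]
  refine sum_congr rfl fun j hj => ?_
  have hij : v i - v j ≠ 0 :=
    sub_ne_zero.mpr fun h => (ne_of_mem_erase hj) (hvs (mem_of_mem_erase hj) hi h.symm)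
  rw [nodal_eq_mul_nodal_erase hj, eval_mul, eval_sub, eval_X, eval_C]
  field_simp

theorem eval_derivative_derivative_nodal (hvs : Set.InjOn v s) (hi : i ∈ s) :
    (derivative (derivative (nodal s v))).eval (v i)
      = 2 * (derivative (nodal s v)).eval (v i) * ∑ j ∈ s.erase i, 1 / (v i - v j) := by
  rw [eval_nodal_derivative_eval_node_eq hi, mul_assoc, ← eval_derivative_nodal_erase hvs hi,
    nodal_eq_mul_nodal_erase hi]
  simp only [derivative_mul, derivative_X_sub_C, one_mul, derivative_add, eval_add, eval_mul,
    eval_sub, eval_X, eval_C, sub_self, zero_mul]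
  ring

theorem eval_laguerreOp_nodal_eq_zero_iff (n : ℕ) (α : ℝ) (hvs : Set.InjOn v s) (hi : i ∈ s)
    (hvi : v i ≠ 0) :
    (laguerreOp n α (nodal s v)).eval (v i) = 0
      ↔ 2 * ∑ j ∈ s.erase i, 1 / (v i - v j) + (α + 1) / v i = 1 := by
  have hP' := eval_nodal_derivative_eval_node_eq (v := v) hi
  have hQ := eval_nodal_erase_ne_zero hvs hi
  have hfactor : (laguerreOp n α (nodal s v)).eval (v i)
      = (nodal (s.erase i) v).eval (v i) * v i
          * (2 * ∑ j ∈ s.erase i, 1 / (v i - v j) + (α + 1) / v i - 1) := by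
    rw [laguerreOp_apply]
    simp only [eval_add, eval_mul, eval_sub, eval_X, eval_C, eval_nodal_at_node hi,
      eval_derivative_derivative_nodal hvs hi, hP']
    field_simp
    ring
  rw [hfactor, mul_eq_zero, mul_eq_zero, sub_eq_zero, or_iff_right (not_or.mpr ⟨hQ, hvi⟩)]

theorem stieltjes_iff_laguerre_eq_zero (α : ℝ) (hvs : Set.InjOn v s)
    (hv : ∀ i ∈ s, v i ≠ 0) :
    (∀ i ∈ s, 2 * ∑ j ∈ s.erase i, 1 / (v i - v j) + (α + 1) / v i = 1)
      ↔ ∀ i ∈ s, laguerre #s α (v i) = 0 :=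
  calc (∀ i ∈ s, 2 * ∑ j ∈ s.erase i, 1 / (v i - v j) + (α + 1) / v i = 1)
      ↔ ∀ i ∈ s, (laguerreOp #s α (nodal s v)).eval (v i) = 0 :=
        forall₂_congr fun i hi => (eval_laguerreOp_nodal_eq_zero_iff #s α hvs hi (hv i hi)).symm
    _ ↔ laguerreOp #s α (nodal s v) = 0 :=
        ⟨eq_zero_of_degree_lt_of_eval_index_eq_zero s hvs
          (degree_laguerreOp_lt _ α natDegree_nodal.le), fun h i _ => by rw [h, eval_zero]⟩
    _ ↔ nodal s v = monicLaguerrePoly #s α :=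
        laguerreOp_eq_zero_iff nodal_monic natDegree_nodal
    _ ↔ ∀ i ∈ s, laguerre #s α (v i) = 0 := nodal_eq_monicLaguerrePoly_iff α hvs

end Nodal

theorem Fin.sum_univ_erase_castSucc {M : Type*} [AddCommGroup M] {n : ℕ} (f : Fin (n + 1) → M)
    (i : Fin n) :
    ∑ j ∈ univ.erase i.castSucc, f j
      = ∑ j ∈ univ.erase i, f j.castSucc + f (Fin.last n) := by
  rw [sum_erase_eq_sub (mem_univ _), Fin.sum_univ_castSucc, sum_erase_eq_sub (mem_univ _)]
  abel

theorem Fin.forall_val_succ_lt_iff {n : ℕ} {P : Fin (n + 1) → Prop} :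
    (∀ i : Fin (n + 1), i.val + 1 < n + 1 → P i) ↔ ∀ i : Fin n, P i.castSucc :=
  ⟨fun h i => h _ (by simp), fun h i hi => h ⟨i, by omega⟩⟩

theorem four_mul_sum_one_div_sq_sub_sq {n : ℕ} (y : Fin (n + 1) → ℝ) (hy : y (Fin.last n) = 0)
    (i : Fin n) :
    4 * ∑ j ∈ univ.erase i.castSucc, 1 / (y i.castSucc ^ 2 - y j ^ 2)
      = 2 * ∑ j ∈ univ.erase i, 1 / (y i.castSucc ^ 2 / 2 - y j.castSucc ^ 2 / 2)
          + (1 + 1) / (y i.castSucc ^ 2 / 2) := by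
  have hterm (j : Fin n) : 1 / (y i.castSucc ^ 2 - y j.castSucc ^ 2)
      = 1 / 2 * (1 / (y i.castSucc ^ 2 / 2 - y j.castSucc ^ 2 / 2)) := by
    rw [← sub_div, one_div_div]
    ring
  rw [Fin.sum_univ_erase_castSucc, sum_congr rfl fun j _ => hterm j, ← mul_sum, hy]
  ring

/-- For `N ≥ 2` and `y` with `y_1 > ⋯ > y_{N−1} > |y_N|`:
`[y_N = 0` and `4 ∑_{j ≠ i} 1/(y_i² − y_j²) = 1` for every `i = 1, …, N−1]` holds if
and only if `[y_N = 0` and `L_{N−1}^{(1)}(y_i²/2) = 0` for every `i = 1, …, N−1]`. -/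
theorem stationary_iff_laguerre_zeros_D (N : ℕ) (hN : 2 ≤ N)
    (y : Fin N → ℝ)
    (hy : (∀ i j : Fin N, i < j → j.val + 1 < N → y j < y i)
      ∧ |y ⟨N - 1, by omega⟩| < y ⟨N - 2, by omega⟩) :
    (y ⟨N - 1, by omega⟩ = 0
        ∧ ∀ i : Fin N, i.val + 1 < N →
            4 * (∑ j ∈ Finset.univ.erase i, 1 / (y i ^ 2 - y j ^ 2)) = 1)
      ↔ (y ⟨N - 1, by omega⟩ = 0
        ∧ ∀ i : Fin N, i.val + 1 < N → laguerre (N - 1) 1 (y i ^ 2 / 2) = 0) := by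
  obtain ⟨m, rfl⟩ : ∃ m, N = m + 2 := ⟨N - 2, by omega⟩
  obtain ⟨hanti, hpos_last⟩ := hy
  refine and_congr_right fun hlast => ?_
  have hy_anti : StrictAnti fun i : Fin (m + 1) => y i.castSucc := fun i j hij =>
    hanti _ _ (Fin.castSucc_lt_castSucc_iff.mpr hij) (by simp only [Fin.val_castSucc]; omega)
  have hy_pos (i : Fin (m + 1)) : 0 < y i.castSucc :=
    ((abs_nonneg _).trans_lt hpos_last).trans_le (hy_anti.antitone (Fin.le_last i))
  have hx_anti : StrictAnti fun i : Fin (m + 1) => y i.castSucc ^ 2 / 2 := fun i j hij =>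
    div_lt_div_of_pos_right (pow_lt_pow_left₀ (hy_anti hij) (hy_pos j).le two_ne_zero) two_pos
  rw [Fin.forall_val_succ_lt_iff, Fin.forall_val_succ_lt_iff]
  simp only [four_mul_sum_one_div_sq_sub_sq y hlast, show m + 2 - 1 = m + 1 from rfl]
  simpa only [mem_univ, forall_const, card_univ, Fintype.card_fin] using
    stieltjes_iff_laguerre_eq_zero (s := univ) 1 hx_anti.injective.injOn
      fun i _ => (div_pos (pow_pos (hy_pos i) 2) two_pos).ne'
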